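/- Let (T_k) be a sequence of continuous linear operators from a Fréchet space X (with increasing seminorms (p_n)) to a topological vector space Y (with increasing seminorms (q_j)). Define X_j = {x ∈ X : q_j(T_k x) = 0 for infinitely many k}. If there exist j, N, K ≥ 1 and a subspace E of finite codimension in X such that ⋃_{k≥K} T_k(ker p_N ∩ E ∩ X_j) is not dense in Y, then (T_k) has no hypercyclic subspace of type 2. -/

import Mathlib

/-!
A nonzero `z ∈ M ∩ ker p_N ∩ E` has `q_j (T_k z) ≠ 0` for all but finitely many `k`: otherwise
`z ∈ X_j`, and the tail `(T_k z)_{k ≥ K}` of its dense orbit, which is still dense, would lie in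
the non-dense union. The type 2 property and the finite codimension of `E` give nonzero
`x_l ∈ M ∩ ker p_N ∩ E` killed by `p_0, …, p_{N+l}`, so every series `∑ a_l x_l` converges in `M`
and each continuous seminorm `q_j ∘ T_k` kills all but finitely many `x_l`. Choosing the `a_l`
greedily, `q_j (T_k z)` is either `0` or at least `2 q_j y₀` at the sum `z`, where
`y₀ = T_{k₀} x_0` has `q_j y₀ > 0`. Then the orbit of `z ≠ 0` misses the open set
`{y | q_j (y - y₀) < q_j y₀}`, so `z` is not hypercyclic.
-/

open Filter Topology

/-- The kernel of a seminorm, as a submodule. -/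
def Seminorm.kerSubmodule {𝕜 X : Type*} [NormedField 𝕜] [AddCommGroup X] [Module 𝕜 X]
    (p : Seminorm 𝕜 X) : Submodule 𝕜 X where
  carrier := {x | p x = 0}
  zero_mem' := map_zero p
  add_mem' := by
    intro a b ha hb
    simp only [Set.mem_setOf_eq] at *
    exact le_antisymm (by simpa [ha, hb] using map_add_le_add p a b) (apply_nonneg p _)
  smul_mem' := by
    intro c x hx
    simp only [Set.mem_setOf_eq] at *
    simp [map_smul_eq_mul, hx]

open Set

namespace Seminorm

variable {𝕜 E : Type*} [NormedField 𝕜] [AddCommGroup E] [Module 𝕜 E]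

theorem mem_kerSubmodule {p : Seminorm 𝕜 E} {x : E} : x ∈ p.kerSubmodule ↔ p x = 0 :=
  Iff.rfl

theorem isClosed_kerSubmodule [TopologicalSpace E] {p : Seminorm 𝕜 E} (hp : Continuous p) :
    IsClosed (p.kerSubmodule : Set E) :=
  isClosed_singleton.preimage hp

theorem map_eq_of_sub_mem_kerSubmodule (p : Seminorm 𝕜 E) {x y : E}
    (h : x - y ∈ p.kerSubmodule) : p x = p y :=
  sub_eq_zero.mp <| abs_nonpos_iff.mp <| (abs_sub_map_le_sub p x y).trans_eq h

theorem finset_sup_apply_eq_zero {ι : Type*} {p : ι → Seminorm 𝕜 E} {s : Finset ι} {x : E}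
    (h : ∀ i ∈ s, p i x = 0) : s.sup p x = 0 :=
  le_antisymm (finset_sup_apply_le le_rfl fun i hi => (h i hi).le) (apply_nonneg _ _)

theorem map_eq_map_sum_range_of_hasSum [TopologicalSpace E] [IsTopologicalAddGroup E]
    {p : Seminorm 𝕜 E} (hp : Continuous p) {f : ℕ → E} {z : E} (hz : HasSum f z) {t : ℕ}
    (htail : ∀ i, t ≤ i → p (f i) = 0) : p z = p (∑ i ∈ Finset.range t, f i) := by
  refine p.map_eq_of_sub_mem_kerSubmodule <|
    (isClosed_kerSubmodule hp).mem_of_tendsto (hz.tendsto_sum_nat.sub_const _) ?_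
  filter_upwards [eventually_ge_atTop t] with u hu
  rw [SetLike.mem_coe, ← Finset.sum_Ico_eq_sub _ hu]
  exact Submodule.sum_mem _ fun i hi => htail i (Finset.mem_Ico.mp hi).1

end Seminorm

namespace Seminorm

variable {𝕜 E ι : Type*} [NontriviallyNormedField 𝕜] [AddCommGroup E] [Module 𝕜 E]

theorem exists_forall_le_map_add_smul {r : ι → Seminorm 𝕜 E} {G : Set ι}
    (hG : G.Finite) {x : E} (hx : ∀ k ∈ G, r k x ≠ 0) (v : E) (c : ℝ) :
    ∃ a : 𝕜, ∀ k ∈ G, c ≤ r k (v + a • x) := by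
  suffices ∀ᶠ a in Bornology.cobounded 𝕜, ∀ k ∈ G, c ≤ ‖a‖ * r k x - r k v by
    refine this.exists.imp fun a ha k hk => (ha k hk).trans ?_
    have := map_sub_le_add (r k) (v + a • x) v
    rw [add_sub_cancel_left, map_smul_eq_mul] at this
    linarith
  refine (eventually_all_finite hG).mpr fun k hk => ?_
  have hpos : 0 < r k x := (apply_nonneg _ _).lt_of_ne' (hx k hk)
  exact (tendsto_atTop_add_const_right _ _
    (tendsto_norm_cobounded_atTop.atTop_mul_const hpos)).eventually_ge_atTop c

theorem exists_seq_forall_le_map_sum_range {r : ι → Seminorm 𝕜 E} {F : ℕ → Set ι}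
    (hF : ∀ i, (F i).Finite) {x : ℕ → E} (hx : ∀ i, ∀ k ∈ F i, r k (x i) ≠ 0) (c : ℝ) :
    ∃ a : ℕ → 𝕜, ∀ i, ∀ k ∈ F i, c ≤ r k (∑ l ∈ Finset.range (i + 1), a l • x l) := by
  choose α hα using fun i v => exists_forall_le_map_add_smul (hF i) (hx i) v c
  let S : ℕ → E := fun t => Nat.rec 0 (fun i v => v + α i v • x i) t
  have hS : ∀ t, S t = ∑ l ∈ Finset.range t, α l (S l) • x l := by
    intro t
    induction t with
    | zero => rfl
    | succ t ih => rw [Finset.sum_range_succ, ← ih]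
  refine ⟨fun l => α l (S l), fun i k hk => ?_⟩
  rw [← hS (i + 1)]
  exact hα i (S i) k hk

end Seminorm

namespace WithSeminorms

variable {𝕜 E ι : Type*} [NontriviallyNormedField 𝕜] [AddCommGroup E] [Module 𝕜 E]
  {p : ι → Seminorm 𝕜 E} {f : ℕ → E}

theorem eventually_map_eq_zero [TopologicalSpace E] (hp : WithSeminorms p)
    (hf : ∀ i, ∀ᶠ l in atTop, p i (f l) = 0) {r : Seminorm 𝕜 E} (hr : Continuous r) :
    ∀ᶠ l in atTop, r (f l) = 0 := by
  obtain ⟨s, C, -, hle⟩ := Seminorm.bound_of_continuous hp r hr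
  filter_upwards [(s.eventually_all (l := atTop)).mpr fun i _ => hf i] with l hl
  refine le_antisymm ?_ (apply_nonneg _ _)
  simpa [Seminorm.finset_sup_apply_eq_zero hl] using hle (f l)

theorem summable_of_eventually_eq_zero [UniformSpace E] [IsUniformAddGroup E] [CompleteSpace E]
    (hp : WithSeminorms p) (hf : ∀ i, ∀ᶠ l in atTop, p i (f l) = 0) : Summable f := by
  refine summable_iff_vanishing.mpr fun e he => ?_
  obtain ⟨⟨s, ε⟩, hε, hball⟩ := hp.hasBasis_zero_ball.mem_iff.mp he
  have hsup : Continuous ⇑(s.sup p) :=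
    Seminorm.continuous_finsetSup fun i _ => hp.continuous_seminorm i
  obtain ⟨L, hL⟩ := eventually_atTop.mp (hp.eventually_map_eq_zero hf hsup)
  refine ⟨Finset.range L, fun t ht => hball ?_⟩
  have hker : ∑ l ∈ t, f l ∈ (s.sup p).kerSubmodule := Submodule.sum_mem _ fun l hl =>
    hL l (not_lt.mp fun hlt => Finset.disjoint_left.mp ht hl (Finset.mem_range.mpr hlt))
  rw [Seminorm.mem_ball_zero, Seminorm.mem_kerSubmodule.mp hker]
  exact hε

theorem exists_mem_forall_le_or_forall_eq_zero [UniformSpace E] [IsUniformAddGroup E]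
    [CompleteSpace E] (hp : WithSeminorms p) {x : ℕ → E} (hx : ∀ i, ∀ᶠ l in atTop, p i (x l) = 0)
    {r : ℕ → Seminorm 𝕜 E} (hr : ∀ k, Continuous (r k)) (hfin : ∀ l, {k | r k (x l) = 0}.Finite)
    (c : ℝ) {M : Submodule 𝕜 E} (hM : IsClosed (M : Set E)) (hxM : ∀ l, x l ∈ M) :
    ∃ z ∈ M, ∀ k, c ≤ r k z ∨ r k z = 0 ∧ ∀ l, r k (x l) = 0 := by
  -- `F i` collects the `k` for which `xᵢ` is the last vector not killed by `r k`; they all kill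
  -- `xᵢ₊₁`, so there are finitely many.
  let F : ℕ → Set ℕ := fun i => {k | r k (x i) ≠ 0 ∧ ∀ l, i < l → r k (x l) = 0}
  have hF : ∀ i, (F i).Finite := fun i =>
    (hfin (i + 1)).subset fun k hk => hk.2 (i + 1) i.lt_succ_self
  obtain ⟨a, ha⟩ := Seminorm.exists_seq_forall_le_map_sum_range hF (fun i k hk => hk.1) c
  have hax : ∀ i, ∀ᶠ l in atTop, p i (a l • x l) = 0 := fun i =>
    (hx i).mono fun l hl => by rw [map_smul_eq_mul, hl, mul_zero]
  have hz := (hp.summable_of_eventually_eq_zero hax).hasSum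
  refine ⟨∑' l, a l • x l, tsum_mem hM fun l => M.smul_mem _ (hxM l), fun k => ?_⟩
  by_cases hk : ∀ l, r k (x l) = 0
  · refine Or.inr ⟨?_, hk⟩
    rw [Seminorm.map_eq_map_sum_range_of_hasSum (hr k) hz (t := 0) fun l _ => by
      rw [map_smul_eq_mul, hk, mul_zero]]
    simp
  · obtain ⟨L, hL⟩ := eventually_atTop.mp (hp.eventually_map_eq_zero hx (hr k))
    have hfinite : {l | r k (x l) ≠ 0}.Finite :=
      (finite_lt_nat L).subset fun l hl => not_le.mp fun hLl => hl (hL l hLl)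
    obtain ⟨i, hi, hmax⟩ := exists_max_image _ id hfinite (not_forall.mp hk)
    have hiF : k ∈ F i := ⟨hi, fun l hl => by_contra fun h => not_lt.mpr (hmax l h) hl⟩
    left
    rw [Seminorm.map_eq_map_sum_range_of_hasSum (hr k) hz (t := i + 1) fun l hl => by
      rw [map_smul_eq_mul, hiF.2 l hl, mul_zero]]
    exact ha i k hiF

end WithSeminorms

theorem Submodule.exists_mem_inf_ne_zero_of_not_finite {K X : Type*} [DivisionRing K]
    [AddCommGroup X] [Module K X] {E V : Submodule K X} [Module.Finite K (X ⧸ E)]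
    (hV : ¬ Module.Finite K V) : ∃ x ∈ V ⊓ E, x ≠ 0 := by
  by_contra! hdisj
  refine hV (Module.Finite.of_injective (E.mkQ ∘ₗ V.subtype) ?_)
  rw [← LinearMap.ker_eq_bot, LinearMap.ker_comp, Submodule.ker_mkQ,
    ← Submodule.disjoint_iff_comap_eq_bot, Submodule.disjoint_def]
  exact fun x hxV hxE => hdisj x ⟨hxV, hxE⟩

theorem WithSeminorms.exists_seq_ne_zero_forall_map_eq_zero {𝕜 E : Type*} [NormedField 𝕜]
    [AddCommGroup E] [Module 𝕜 E] [TopologicalSpace E] [IsTopologicalAddGroup E]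
    {p : ℕ → Seminorm 𝕜 E} (hp : WithSeminorms p) {M V : Submodule 𝕜 E}
    [Module.Finite 𝕜 (E ⧸ V)]
    (hM : ∀ r : Seminorm 𝕜 E, Continuous r → ¬ Module.Finite 𝕜 ↥(M ⊓ r.kerSubmodule)) :
    ∃ x : ℕ → E, ∀ l, x l ∈ M ⊓ V ∧ x l ≠ 0 ∧ ∀ i ≤ l, p i (x l) = 0 := by
  choose x hx hx0 using fun l => Submodule.exists_mem_inf_ne_zero_of_not_finite (E := V)
    (hM _ (Seminorm.continuous_finsetSup fun i (_ : i ∈ Finset.range (l + 1)) =>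
      hp.continuous_seminorm i))
  refine ⟨x, fun l => ⟨⟨(hx l).1.1, (hx l).2⟩, hx0 l, fun i hi => ?_⟩⟩
  refine le_antisymm ?_ (apply_nonneg _ _)
  exact (Seminorm.le_finset_sup_apply (Finset.mem_range.mpr (by omega))).trans_eq (hx l).1.2

theorem DenseRange.dense_image_Ici (𝕜 : Type*) {Y : Type*} [NontriviallyNormedField 𝕜]
    [AddCommGroup Y] [Module 𝕜 Y] [TopologicalSpace Y] [IsTopologicalAddGroup Y]
    [ContinuousSMul 𝕜 Y] {f : ℕ → Y} (hf : DenseRange f) (K : ℕ) :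
    Dense (f '' Ici K) := by
  -- The separation quotient is `T₁` and, unless it is a single point, has no isolated points.
  suffices Dense (SeparationQuotient.mk '' (f '' Ici K)) from
    SeparationQuotient.isInducing_mk.dense_iff.mpr fun y => this _
  rcases subsingleton_or_nontrivial (SeparationQuotient Y) with _ | _
  · rw [((nonempty_Ici.image f).image _).eq_univ]
    exact dense_univ
  have := Module.punctured_nhds_neBot 𝕜 (SeparationQuotient Y)
  refine ((SeparationQuotient.surjective_mk.denseRange.comp hf
    SeparationQuotient.continuous_mk).sdiff_finite
    ((finite_Iio K).image (SeparationQuotient.mk ∘ f))).mono ?_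
  rintro _ ⟨⟨k, rfl⟩, hk⟩
  exact ⟨f k, ⟨k, mem_Ici.mpr (not_lt.mp fun hlt => hk ⟨k, hlt, rfl⟩), rfl⟩, rfl⟩

theorem Dense.exists_mem_seminorm_pos_lt {𝕜 Y : Type*} [NormedField 𝕜] [AddCommGroup Y]
    [Module 𝕜 Y] [TopologicalSpace Y] [IsTopologicalAddGroup Y] {s : Set Y} (hs : Dense s)
    {q : Seminorm 𝕜 Y} (hq : Continuous q) {y₀ : Y} (hy₀ : 0 < q y₀) :
    ∃ y ∈ s, 0 < q y ∧ q y < 2 * q y₀ := by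
  obtain ⟨y, hys, hy⟩ := hs.exists_mem_open (isOpen_lt (hq.comp (continuous_sub_right y₀))
    continuous_const) ⟨y₀, show q (y₀ - y₀) < q y₀ by simpa using hy₀⟩
  have := abs_lt.mp ((abs_sub_map_le_sub q y y₀).trans_lt hy)
  exact ⟨y, hys, by linarith, by linarith⟩

theorem no_hypercyclic_subspace_type2_criterion_general {𝕜 X Y : Type*} [RCLike 𝕜]
    [AddCommGroup X] [Module 𝕜 X] [UniformSpace X] [IsUniformAddGroup X]
    [CompleteSpace X]
    [AddCommGroup Y] [Module 𝕜 Y] [TopologicalSpace Y] [IsTopologicalAddGroup Y]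
    [ContinuousSMul 𝕜 Y]
    (p : ℕ → Seminorm 𝕜 X) (hp : WithSeminorms p)
    (q : ℕ → Seminorm 𝕜 Y) (hq : WithSeminorms q)
    (T : ℕ → X →L[𝕜] Y)
    (j N K : ℕ) (E : Submodule 𝕜 X) (hE : Module.Finite 𝕜 (X ⧸ E))
    (h : ¬ Dense (⋃ k ≥ K, T k ''
      (((p N).kerSubmodule : Set X) ∩ (E : Set X) ∩
        {x : X | {k : ℕ | q j (T k x) = 0}.Infinite}))) :
    ¬ ∃ M : Submodule 𝕜 X, IsClosed (M : Set X) ∧ ¬ Module.Finite 𝕜 M ∧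
      (∀ x ∈ M, x ≠ 0 → Dense (Set.range fun k => T k x)) ∧
      (∀ r : Seminorm 𝕜 X, Continuous r → ¬ Module.Finite 𝕜 ↥(M ⊓ r.kerSubmodule)) := by
  rintro ⟨M, hMc, -, hHC, hT2⟩
  have hfin : ∀ z ∈ M, p N z = 0 → z ∈ E → z ≠ 0 → {k | q j (T k z) = 0}.Finite := by
    intro z hzM hzN hzE hz0
    by_contra hinf
    refine h ((DenseRange.dense_image_Ici 𝕜 (hHC z hzM hz0) K).mono ?_)
    rintro _ ⟨k, hk, rfl⟩
    exact mem_biUnion hk ⟨z, ⟨⟨hzN, hzE⟩, hinf⟩, rfl⟩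
  have := hE
  obtain ⟨x, hx⟩ := hp.exists_seq_ne_zero_forall_map_eq_zero (V := E) hT2
  have hxfin : ∀ l, {k | q j (T k (x (N + l))) = 0}.Finite := fun l =>
    hfin _ (hx _).1.1 ((hx _).2.2 N (by omega)) (hx _).1.2 (hx _).2.1
  obtain ⟨k₀, hk₀⟩ : ∃ k, q j (T k (x N)) ≠ 0 := (hxfin 0).exists_notMem
  have hpos : 0 < q j (T k₀ (x N)) := (apply_nonneg _ _).lt_of_ne' hk₀
  obtain ⟨z, hzM, hz⟩ := hp.exists_mem_forall_le_or_forall_eq_zero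
    (fun i => eventually_atTop.mpr ⟨i, fun l hl => (hx _).2.2 i (by omega)⟩)
    (r := fun k => (q j).comp (T k : X →ₗ[𝕜] Y))
    (fun k => (hq.continuous_seminorm j).comp (T k).continuous) hxfin
    (2 * q j (T k₀ (x N))) hMc fun l => (hx _).1.1
  have hz0 : z ≠ 0 := by
    rintro rfl
    rcases hz k₀ with hle | ⟨-, hkill⟩
    · rw [map_zero] at hle
      linarith
    · exact hk₀ (hkill 0)
  obtain ⟨_, ⟨k, rfl⟩, hk, hk'⟩ :=
    (hHC z hzM hz0).exists_mem_seminorm_pos_lt (hq.continuous_seminorm j) hpos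
  rcases hz k with hle | ⟨hzero, -⟩
  · exact not_lt.mpr hle hk'
  · exact hk.ne' hzero

/-- Criterion for the absence of hypercyclic subspaces of type 2: with
`X_j = {x : q j (T k x) = 0 for infinitely many k}`, if for some `j, N, K` and some
subspace `E` of finite codimension the set `⋃_{k ≥ K} T k (ker p_N ∩ E ∩ X_j)` is not
dense in `Y`, then `(T k)` has no hypercyclic subspace of type 2. -/
theorem no_hypercyclic_subspace_type2_criterion {𝕜 X Y : Type*} [RCLike 𝕜]
    [AddCommGroup X] [Module 𝕜 X] [UniformSpace X] [IsUniformAddGroup X]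
    [ContinuousSMul 𝕜 X] [CompleteSpace X] [T2Space X]
    [AddCommGroup Y] [Module 𝕜 Y] [TopologicalSpace Y] [IsTopologicalAddGroup Y]
    [ContinuousSMul 𝕜 Y] [TopologicalSpace.SeparableSpace Y]
    (p : ℕ → Seminorm 𝕜 X) (hp : WithSeminorms p) (hpm : ∀ n, p n ≤ p (n + 1))
    (hXinf : ¬ Module.Finite 𝕜 X)
    (q : ℕ → Seminorm 𝕜 Y) (hq : WithSeminorms q) (hqm : ∀ j, q j ≤ q (j + 1))
    (T : ℕ → X →L[𝕜] Y)
    (j N K : ℕ) (E : Submodule 𝕜 X) (hE : Module.Finite 𝕜 (X ⧸ E))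
    (h : ¬ Dense (⋃ k ≥ K, T k ''
      (((p N).kerSubmodule : Set X) ∩ (E : Set X) ∩
        {x : X | {k : ℕ | q j (T k x) = 0}.Infinite}))) :
    ¬ ∃ M : Submodule 𝕜 X, IsClosed (M : Set X) ∧ ¬ Module.Finite 𝕜 M ∧
      (∀ x ∈ M, x ≠ 0 → Dense (Set.range fun k => T k x)) ∧
      (∀ r : Seminorm 𝕜 X, Continuous r → ¬ Module.Finite 𝕜 ↥(M ⊓ r.kerSubmodule)) :=
  no_hypercyclic_subspace_type2_criterion_general p hp q hq T j N K E hE h
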